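/- Let g(q) = max_{k=2..N} |1 - εq λ_k| with 0 < λ_2 ≤ ... ≤ λ_N and 0 < ε λ_N q < 2 for all q in the relevant range. Then g is strictly decreasing in q as long as 1 - εqλ_2 ≥ |1 - εqλ_N| and in particular is minimized over q ∈ [0, q_max] at q = q_max whenever ε q_max λ_N ≤ 1. Consequently, the access probability p minimizing the spectral radius ρ(E[W̄] - 𝟙𝟙ᵀ/N) coincides with the p maximizing q(p) = p(1-p)^d, namely p = 1/(d+1). -/

import Mathlib

/-!
Once `ε q λ_k ≤ 1` for every `k`, each `|1 - ε q λ_k|` equals `1 - ε q λ_k`, so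
`g q = 1 - ε q λ_min` is an affine, strictly decreasing function of `q` on `[0, q_max]`.
Minimising `g` therefore amounts to maximising `q(p) = p (1 - p)^d`, whose unique maximiser
on `[0, 1]` is the critical point `p = 1/(d+1)`, where `q` takes the value `q_max`.
-/

open Set

section AccessRate

lemma hasDerivAt_mul_one_sub_pow {d : ℕ} (hd : d ≠ 0) (x : ℝ) :
    HasDerivAt (fun x : ℝ => x * (1 - x) ^ d) ((1 - x) ^ (d - 1) * (1 - (d + 1) * x)) x := by
  obtain ⟨n, rfl⟩ := Nat.exists_eq_add_one_of_ne_zero hd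
  have h : HasDerivAt (fun x : ℝ => x * (1 - x) ^ (n + 1))
      (1 * (1 - x) ^ (n + 1) + x * ((n + 1 : ℕ) * (1 - x) ^ n * -1)) x :=
    (hasDerivAt_id' x).mul (((hasDerivAt_id' x).const_sub 1).pow (n + 1))
  convert h using 1
  push_cast
  ring

lemma strictMonoOn_mul_one_sub_pow {d : ℕ} (hd : d ≠ 0) :
    StrictMonoOn (fun x : ℝ => x * (1 - x) ^ d) (Icc 0 (1 / (d + 1))) := by
  refine strictMonoOn_of_deriv_pos (convex_Icc _ _) (by fun_prop) fun x hx => ?_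
  obtain ⟨hx0, hx'⟩ := interior_Icc (a := (0 : ℝ)) ▸ hx
  rw [lt_div_iff₀ (by positivity), mul_comm] at hx'
  have hx1 : x < 1 := by nlinarith
  rw [(hasDerivAt_mul_one_sub_pow hd x).deriv]
  exact mul_pos (pow_pos (by linarith) _) (by linarith)

lemma strictAntiOn_mul_one_sub_pow {d : ℕ} (hd : d ≠ 0) :
    StrictAntiOn (fun x : ℝ => x * (1 - x) ^ d) (Icc (1 / (d + 1)) 1) := by
  refine strictAntiOn_of_deriv_neg (convex_Icc _ _) (by fun_prop) fun x hx => ?_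
  obtain ⟨hx', hx1⟩ := interior_Icc (b := (1 : ℝ)) ▸ hx
  rw [div_lt_iff₀ (by positivity), mul_comm] at hx'
  rw [(hasDerivAt_mul_one_sub_pow hd x).deriv]
  exact mul_neg_of_pos_of_neg (pow_pos (by linarith) _) (by linarith)

lemma mul_one_sub_pow_lt_of_ne (d : ℕ) {p : ℝ} (hp : p ∈ Icc (0 : ℝ) 1)
    (hne : p ≠ 1 / (d + 1)) :
    p * (1 - p) ^ d < 1 / (d + 1) * (1 - 1 / (d + 1)) ^ d := by
  rcases eq_or_ne d 0 with rfl | hd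
  · norm_num at hne ⊢
    exact lt_of_le_of_ne hp.2 hne
  have hc : (1 : ℝ) / (d + 1) ∈ Icc 0 1 :=
    ⟨by positivity, (div_le_one (by positivity)).2 (by simp)⟩
  rcases hne.lt_or_gt with h | h
  · exact strictMonoOn_mul_one_sub_pow hd ⟨hp.1, h.le⟩ ⟨hc.1, le_rfl⟩ h
  · exact strictAntiOn_mul_one_sub_pow hd ⟨le_rfl, hc.2⟩ ⟨h.le, hp.2⟩ h

lemma one_div_succ_mul_one_sub_pow (d : ℕ) :
    1 / (d + 1 : ℝ) * (1 - 1 / (d + 1)) ^ d = (d : ℝ) ^ d / ((d : ℝ) + 1) ^ (d + 1) := by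
  have hd : (d + 1 : ℝ) ≠ 0 := by positivity
  rw [one_sub_div hd, add_sub_cancel_right, div_pow, pow_succ']
  field_simp

end AccessRate

section SpectralRadius

variable {ι : Type*} {s : Finset ι} (hs : s.Nonempty) {lam : ι → ℝ}

lemma sup'_abs_one_sub_mul_eq {c : ℝ} (hc : 0 ≤ c) (h : ∀ k ∈ s, c * lam k ≤ 1) :
    s.sup' hs (fun k => |1 - c * lam k|) = 1 - c * s.inf' hs lam := by
  obtain ⟨k₀, hk₀, hmin⟩ := s.exists_mem_eq_inf' hs lam
  apply le_antisymm
  · refine Finset.sup'_le hs _ fun k hk => ?_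
    rw [abs_of_nonneg (sub_nonneg.2 (h k hk))]
    gcongr
    exact Finset.inf'_le lam hk
  · refine Finset.le_sup'_of_le _ hk₀ ?_
    rw [hmin]
    exact le_abs_self _

lemma strictAntiOn_sup'_abs_one_sub_mul (hlam : ∀ k ∈ s, 0 < lam k) {ε qmax : ℝ} (hε : 0 < ε)
    (hsmall : ε * qmax * s.sup' hs lam ≤ 1) :
    StrictAntiOn (fun q => s.sup' hs fun k => |1 - ε * q * lam k|) (Icc 0 qmax) := by
  have affine : ∀ q ∈ Icc 0 qmax,
      s.sup' hs (fun k => |1 - ε * q * lam k|) = 1 - ε * q * s.inf' hs lam := by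
    refine fun q hq => sup'_abs_one_sub_mul_eq hs (by have := hq.1; positivity) fun k hk => ?_
    calc ε * q * lam k ≤ ε * qmax * s.sup' hs lam := by
          have := hlam k hk
          have := hq.1.trans hq.2
          gcongr
          · exact hq.2
          · exact Finset.le_sup' lam hk
      _ ≤ 1 := hsmall
  have hmin : 0 < s.inf' hs lam := (Finset.lt_inf'_iff hs).2 hlam
  intro a ha b hb hab
  simp only [affine a ha, affine b hb]
  gcongr

end SpectralRadius

theorem optimal_access_minimizes_spectral_radius_general
    (m : ℕ) (hm : 0 < m) (lam : Fin m → ℝ) (hlam : ∀ k, 0 < lam k)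
    (ε : ℝ) (hε : 0 < ε) (d : ℕ)
    (qmax : ℝ) (hqmax : qmax = (d : ℝ) ^ d / ((d : ℝ) + 1) ^ (d + 1))
    (hsmall : ε * qmax * (Finset.univ.sup' ⟨⟨0, hm⟩, Finset.mem_univ _⟩ lam) ≤ 1)
    (g : ℝ → ℝ)
    (hg : g = fun q => Finset.univ.sup' ⟨⟨0, hm⟩, Finset.mem_univ _⟩
        (fun k => |1 - ε * q * lam k|)) :
    StrictAntiOn g (Set.Icc 0 qmax) ∧
    (∀ q ∈ Set.Icc (0 : ℝ) qmax, g qmax ≤ g q) ∧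
    (∀ p ∈ Set.Icc (0 : ℝ) 1, p ≠ 1 / ((d : ℝ) + 1) →
      g ((1 / ((d : ℝ) + 1)) * (1 - 1 / ((d : ℝ) + 1)) ^ d) < g (p * (1 - p) ^ d)) := by
  have hanti : StrictAntiOn g (Icc 0 qmax) :=
    hg ▸ strictAntiOn_sup'_abs_one_sub_mul _ (fun k _ => hlam k) hε hsmall
  refine ⟨hanti, fun q hq => hanti.antitoneOn hq ⟨hq.1.trans hq.2, le_rfl⟩ hq.2,
    fun p hp hne => ?_⟩
  have hlt := mul_one_sub_pow_lt_of_ne d hp hne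
  rw [one_div_succ_mul_one_sub_pow, ← hqmax] at hlt ⊢
  have hq : 0 ≤ p * (1 - p) ^ d := mul_nonneg hp.1 (pow_nonneg (sub_nonneg.2 hp.2) d)
  exact hanti ⟨hq, hlt.le⟩ ⟨hq.trans hlt.le, le_rfl⟩ hlt

/-- Let `g(q) = max_k |1 - ε q λ_k|` over the nonzero Laplacian eigenvalues `λ_k > 0`.
If `ε q_max λ_max ≤ 1` with `q_max = d^d/(d+1)^{d+1}` (the maximum of `q(p) = p(1-p)^d`),
then `g` is strictly decreasing on `[0, q_max]`, is minimized at `q_max`, and consequently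
the access probability minimizing the spectral radius is the one maximizing `q(p)`,
namely `p = 1/(d+1)`. -/
theorem optimal_access_minimizes_spectral_radius
    (m : ℕ) (hm : 0 < m) (lam : Fin m → ℝ) (hlam : ∀ k, 0 < lam k)
    (ε : ℝ) (hε : 0 < ε) (d : ℕ) (hd : 1 ≤ d)
    (qmax : ℝ) (hqmax : qmax = (d : ℝ) ^ d / ((d : ℝ) + 1) ^ (d + 1))
    (hsmall : ε * qmax * (Finset.univ.sup' ⟨⟨0, hm⟩, Finset.mem_univ _⟩ lam) ≤ 1)
    (g : ℝ → ℝ)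
    (hg : g = fun q => Finset.univ.sup' ⟨⟨0, hm⟩, Finset.mem_univ _⟩
        (fun k => |1 - ε * q * lam k|)) :
    StrictAntiOn g (Set.Icc 0 qmax) ∧
    (∀ q ∈ Set.Icc (0 : ℝ) qmax, g qmax ≤ g q) ∧
    (∀ p ∈ Set.Icc (0 : ℝ) 1, p ≠ 1 / ((d : ℝ) + 1) →
      g ((1 / ((d : ℝ) + 1)) * (1 - 1 / ((d : ℝ) + 1)) ^ d) < g (p * (1 - p) ^ d)) :=
  optimal_access_minimizes_spectral_radius_general m hm lam hlam ε hε d qmax hqmax hsmall g hg
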